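/- The limit closure of the reachability set of a VAS V = (A, δ, x_in) equals the set of vectors of the form x_in + δ(v) + ω·δ(π), where v ∈ A* and π is a productive sequence in V for v. -/

import Mathlib

/-- Vectors over `ℕ∞ = ℕ ∪ {ω}`. -/
abbrev Vec (d : ℕ) := Fin d → ℕ∞

/-- A sequence in `ℕ∞` converges to `l` if it is ultimately constant equal to `l`,
or its integer values form an infinite subsequence tending to infinity and `l = ω`. -/
def ConvTo (s : ℕ → ℕ∞) (l : ℕ∞) : Prop :=
  (∃ N, ∀ n ≥ N, s n = l) ∨
  (l = ⊤ ∧ {n | s n ≠ ⊤}.Infinite ∧ ∀ B : ℕ, ∃ N, ∀ n ≥ N, (B : ℕ∞) ≤ s n)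

/-- Componentwise convergence of a sequence of vectors. -/
def VConvTo {d : ℕ} (s : ℕ → Vec d) (x : Vec d) : Prop :=
  ∀ i, ConvTo (fun n => s n i) (x i)

/-- The limit closure: the set of limits of convergent sequences of elements of `M`. -/
def LimCl {d : ℕ} (M : Set (Vec d)) : Set (Vec d) :=
  {x | ∃ s : ℕ → Vec d, (∀ n, s n ∈ M) ∧ VConvTo s x}

/-- Downward closure for the pointwise order on `ℕ∞^d`. -/
def dc {d : ℕ} (M : Set (Vec d)) : Set (Vec d) := {x | ∃ y ∈ M, x ≤ y}

/-- The copy of `ℕ^d` inside `ℕ∞^d`. -/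
def FinVec (d : ℕ) : Set (Vec d) := {x | ∀ i, x i ≠ ⊤}

/-- The embedding of `ℕ^d` into `ℕ∞^d`. -/
def toOmega {d : ℕ} (x : Fin d → ℕ) : Vec d := fun i => (x i : ℕ∞)

/-- A vector addition system of dimension `d` over alphabet `α`. -/
structure VAS (α : Type) (d : ℕ) where
  δ : α → Fin d → ℤ
  init : Fin d → ℕ

/-- Displacement of a word: `δ` extended to a monoid morphism on words. -/
def wordδ {α : Type} {d : ℕ} (V : VAS α d) (w : List α) : Fin d → ℤ :=
  (w.map V.δ).sum

/-- A word is fireable from `x` if every intermediate state is nonnegative. -/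
def Fireable {α : Type} {d : ℕ} (V : VAS α d) (x : Fin d → ℕ) (w : List α) : Prop :=
  ∀ p, p <+: w → ∀ i, 0 ≤ (x i : ℤ) + wordδ V p i

/-- The reachability set of the VAS `V`. -/
def PostStar {α : Type} {d : ℕ} (V : VAS α d) : Set (Fin d → ℕ) :=
  {y | ∃ w : List α, Fireable V V.init w ∧ ∀ i, (y i : ℤ) = V.init i + wordδ V w i}

/-- The word `u_0^n a_1 u_1^n ⋯ a_k u_k^n`. -/
def iterWord {α : Type} {k : ℕ} (u : Fin (k+1) → List α) (a : Fin k → α) (n : ℕ) : List α :=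
  (List.replicate n (u 0)).flatten ++
    (List.ofFn fun i : Fin k => a i :: (List.replicate n (u i.succ)).flatten).flatten

/-- `π = (u_0, …, u_k)` is productive for `v = a_1 ⋯ a_k`. -/
def Productive {α : Type} {d : ℕ} (V : VAS α d) {k : ℕ}
    (u : Fin (k+1) → List α) (a : Fin k → α) : Prop :=
  ∀ n ≥ 1, Fireable V V.init (iterWord u a n)

/-!
Pumping gives one inclusion: if `u₀ a₁ u₁ ⋯ a_k u_k` is fireable and every partial sum
`δ(u₀) + ⋯ + δ(u_j)` is nonnegative, then every `u₀ⁿ a₁ u₁ⁿ ⋯ a_k u_kⁿ` is fireable, and the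
vectors `x_in + δ(v) + n·δ(π)` it reaches converge to `x_in + δ(v) + ω·δ(π)`.

Conversely, let reachable vectors converge to `x`. Higman's lemma, applied to the runs annotated
with the states after each letter, yields two runs `w₁`, `w₂`, taken late enough that the finite
coordinates of `x` have stabilised and the others have grown, such that `w₁` embeds into `w₂`
letter by letter with each state of `w₁` dominated by the matched state of `w₂`. Cutting `w₂` at
the matched letters gives `π` for `v = w₁`; domination is exactly nonnegativity of the partial sums
of `δ(π)`, so `π` is productive, and `δ(π) = δ(w₂) - δ(w₁)` vanishes exactly at the finite
coordinates of `x`.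
-/

open Filter

section Displacement
variable {α : Type} {d : ℕ} (V : VAS α d)

@[simp] theorem wordδ_nil : wordδ V [] = 0 := rfl

@[simp] theorem wordδ_cons (a : α) (w : List α) : wordδ V (a :: w) = V.δ a + wordδ V w := by
  simp [wordδ]

@[simp] theorem wordδ_append (s t : List α) : wordδ V (s ++ t) = wordδ V s + wordδ V t := by
  simp [wordδ]

@[simp] theorem wordδ_flatten_replicate (n : ℕ) (w : List α) :
    wordδ V (List.replicate n w).flatten = n • wordδ V w := by
  induction n with
  | zero => simp
  | succ n ih => rw [List.replicate_succ, List.flatten_cons, wordδ_append, ih, succ_nsmul']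

theorem iterWord_of_length_zero (u : Fin 1 → List α) (a : Fin 0 → α) (n : ℕ) :
    iterWord u a n = (List.replicate n (u 0)).flatten := by
  simp [iterWord]

theorem iterWord_succ {k : ℕ} (u : Fin (k + 1 + 1) → List α) (a : Fin (k + 1) → α) (n : ℕ) :
    iterWord u a n =
      (List.replicate n (u 0)).flatten ++ a 0 :: iterWord (Fin.tail u) (Fin.tail a) n := by
  simp [iterWord, List.ofFn_succ, Fin.tail]

theorem iterWord_one_cons_head {k : ℕ} (b : α) (u : Fin (k + 1) → List α) (a : Fin k → α) :
    iterWord (Fin.cons (b :: u 0) (Fin.tail u)) a 1 = b :: iterWord u a 1 := by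
  simp [iterWord, Fin.tail]

theorem iterWord_zero_cons_tail {k : ℕ} (v : List α) (u : Fin (k + 1) → List α) (a : Fin k → α) :
    iterWord (Fin.cons v (Fin.tail u)) a 0 = iterWord u a 0 := by
  simp [iterWord, Fin.tail]

theorem wordδ_iterWord {k : ℕ} (u : Fin (k + 1) → List α) (a : Fin k → α) (n : ℕ) :
    wordδ V (iterWord u a n) = n • ∑ l, wordδ V (u l) + ∑ j, V.δ (a j) := by
  induction k with
  | zero => simp [iterWord_of_length_zero]
  | succ k ih =>
    rw [iterWord_succ, wordδ_append, wordδ_cons, ih,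
      Fin.sum_univ_succ (f := fun l => wordδ V (u l)), Fin.sum_univ_succ (f := fun j => V.δ (a j))]
    simp only [wordδ_flatten_replicate, Fin.tail, nsmul_add]
    abel

end Displacement

section Fireability
variable {α : Type} {d : ℕ} (V : VAS α d)

def IntFireable (z : Fin d → ℤ) (w : List α) : Prop :=
  ∀ p, p <+: w → 0 ≤ z + wordδ V p

variable {V} {z z' : Fin d → ℤ} {w : List α}

theorem fireable_iff_intFireable {x : Fin d → ℕ} :
    Fireable V x w ↔ IntFireable V (fun i => (x i : ℤ)) w :=
  Iff.rfl

theorem IntFireable.nonneg (h : IntFireable V z w) : 0 ≤ z := by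
  simpa using h [] List.nil_prefix

theorem IntFireable.mono (h : IntFireable V z w) (hz : z ≤ z') : IntFireable V z' w :=
  fun p hp => (h p hp).trans (add_le_add_left hz _)

theorem intFireable_nil : IntFireable V z [] ↔ 0 ≤ z := by
  simp [IntFireable]

theorem intFireable_cons {a : α} :
    IntFireable V z (a :: w) ↔ 0 ≤ z ∧ IntFireable V (z + V.δ a) w := by
  simp only [IntFireable, List.prefix_cons_iff, or_imp, forall_and, forall_eq, wordδ_nil, add_zero,
    forall_exists_index, and_imp]
  refine and_congr_right fun _ => ⟨fun h p hp => ?_, fun h _ p hq hp => ?_⟩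
  · simpa [add_assoc] using h _ p rfl hp
  · simpa [hq, add_assoc] using h p hp

theorem intFireable_append {s t : List α} :
    IntFireable V z (s ++ t) ↔ IntFireable V z s ∧ IntFireable V (z + wordδ V s) t := by
  induction s generalizing z with
  | nil => simpa [intFireable_nil] using fun h => h.nonneg
  | cons a s ih =>
    simp only [List.cons_append, intFireable_cons, ih, wordδ_cons, add_assoc, and_assoc]

end Fireability

section Pumping
variable {α : Type} {d : ℕ} (V : VAS α d)

/-- `S + δ(u 0) + ⋯ + δ(u j) ≥ 0` for every `j`. -/
def PartialSumsNonneg : {k : ℕ} → (Fin d → ℤ) → (Fin (k + 1) → List α) → Prop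
  | 0, S, u => 0 ≤ S + wordδ V (u 0)
  | _ + 1, S, u => 0 ≤ S + wordδ V (u 0) ∧ PartialSumsNonneg (S + wordδ V (u 0)) (Fin.tail u)

variable {V}

theorem partialSumsNonneg_cons_head {k : ℕ} {S : Fin d → ℤ} (b : α) (u : Fin (k + 1) → List α) :
    PartialSumsNonneg V S (Fin.cons (b :: u 0) (Fin.tail u)) ↔
      PartialSumsNonneg V (S + V.δ b) u := by
  cases k <;> simp [PartialSumsNonneg, add_assoc]

theorem PartialSumsNonneg.head_nonneg {k : ℕ} {S : Fin d → ℤ} {u : Fin (k + 1) → List α}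
    (h : PartialSumsNonneg V S u) : 0 ≤ S + wordδ V (u 0) := by
  cases k
  exacts [h, h.1]

theorem IntFireable.flatten_replicate {z S : Fin d → ℤ} {w : List α} (hw : IntFireable V z w)
    (hS : 0 ≤ S) (hSw : 0 ≤ S + wordδ V w) (n : ℕ) :
    IntFireable V (z + n • S) (List.replicate (n + 1) w).flatten := by
  induction n with
  | zero => simpa using hw
  | succ n ih =>
    rw [List.replicate_succ, List.flatten_cons, intFireable_append]
    refine ⟨hw.mono (le_add_of_nonneg_right (nsmul_nonneg hS _)), ih.mono ?_⟩
    rw [show z + (n + 1) • S + wordδ V w = z + n • S + (S + wordδ V w) by rw [succ_nsmul]; abel]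
    exact le_add_of_nonneg_right hSw

theorem IntFireable.iterWord_of_partialSumsNonneg :
    ∀ {k : ℕ} {u : Fin (k + 1) → List α} {a : Fin k → α} {z S : Fin d → ℤ},
      IntFireable V z (iterWord u a 1) → 0 ≤ S → PartialSumsNonneg V S u →
      ∀ n : ℕ, IntFireable V (z + n • S) (iterWord u a (n + 1))
  | 0, u, a, z, S, hz, hS, hu, n => by
    rw [iterWord_of_length_zero, List.replicate_one, List.flatten_singleton] at hz
    rw [iterWord_of_length_zero]
    exact hz.flatten_replicate hS hu n
  | k + 1, u, a, z, S, hz, hS, hu, n => by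
    rw [iterWord_succ] at hz ⊢
    simp only [List.replicate_one, List.flatten_singleton, intFireable_append,
      intFireable_cons] at hz
    obtain ⟨hu0, hzu0, hrest⟩ := hz
    rw [intFireable_append, intFireable_cons]
    have hstate : z + n • S + wordδ V (List.replicate (n + 1) (u 0)).flatten =
        z + wordδ V (u 0) + n • (S + wordδ V (u 0)) := by
      rw [wordδ_flatten_replicate, succ_nsmul, nsmul_add]; abel
    refine ⟨hu0.flatten_replicate hS hu.head_nonneg n, ?_, ?_⟩
    · rw [hstate]
      exact add_nonneg hzu0 (nsmul_nonneg hu.head_nonneg n)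
    · rw [hstate, show z + wordδ V (u 0) + n • (S + wordδ V (u 0)) + V.δ (a 0) =
          z + wordδ V (u 0) + V.δ (a 0) + n • (S + wordδ V (u 0)) by abel]
      exact hrest.iterWord_of_partialSumsNonneg hu.head_nonneg hu.2 n

theorem productive_of_partialSumsNonneg {k : ℕ} {u : Fin (k + 1) → List α} {a : Fin k → α}
    (h : Fireable V V.init (iterWord u a 1)) (hu : PartialSumsNonneg V 0 u) :
    Productive V u a := by
  intro n hn
  obtain ⟨m, rfl⟩ := Nat.exists_eq_add_of_le' hn
  rw [fireable_iff_intFireable]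
  simpa using IntFireable.iterWord_of_partialSumsNonneg h le_rfl hu m

end Pumping

section Embedding
variable {α : Type} {d : ℕ} (V : VAS α d)

def annotatedRun : (Fin d → ℤ) → List α → List (α × (Fin d → ℤ))
  | _, [] => []
  | z, a :: w => (a, z + V.δ a) :: annotatedRun (z + V.δ a) w

def LetterStateLE (p q : α × (Fin d → ℤ)) : Prop :=
  p.1 = q.1 ∧ p.2 ≤ q.2

instance : IsPreorder (α × (Fin d → ℤ)) LetterStateLE where
  refl _ := ⟨rfl, le_rfl⟩
  trans _ _ _ hpq hqr := ⟨hpq.1.trans hqr.1, hpq.2.trans hqr.2⟩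

variable {V}

theorem IntFireable.annotatedRun_nonneg : ∀ {z : Fin d → ℤ} {w : List α}, IntFireable V z w →
    ∀ p ∈ annotatedRun V z w, 0 ≤ p.2
  | _, [], _ => by simp [annotatedRun]
  | z, a :: w, h => by
    rw [intFireable_cons] at h
    simp only [annotatedRun, List.mem_cons, forall_eq_or_imp]
    exact ⟨h.2.nonneg, h.2.annotatedRun_nonneg⟩

theorem exists_iterWord_of_sublistForall₂ : ∀ {w₂ w₁ : List α} {z₁ z₂ : Fin d → ℤ},
    List.SublistForall₂ LetterStateLE (annotatedRun V z₁ w₁) (annotatedRun V z₂ w₂) →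
    z₁ + wordδ V w₁ ≤ z₂ + wordδ V w₂ →
    ∃ (k : ℕ) (u : Fin (k + 1) → List α) (a : Fin k → α),
      iterWord u a 1 = w₂ ∧ iterWord u a 0 = w₁ ∧ PartialSumsNonneg V (z₂ - z₁) u
  | w₂, [], z₁, z₂, _, hle => by
    refine ⟨0, ![w₂], Fin.elim0, by simp [iterWord_of_length_zero],
      by simp [iterWord_of_length_zero], ?_⟩
    simpa [PartialSumsNonneg, sub_add_eq_add_sub, sub_nonneg] using hle
  | [], _ :: _, _, _, h, _ => by cases h
  | b :: w₂, a :: w₁, z₁, z₂, h, hle => by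
    cases h with
    | cons hab h =>
      rw [wordδ_cons, wordδ_cons, ← add_assoc, ← add_assoc] at hle
      obtain ⟨rfl, hz⟩ := hab
      obtain ⟨k, u, a', hw₂, hw₁, hu⟩ := exists_iterWord_of_sublistForall₂ h hle
      refine ⟨k + 1, Fin.cons [] u, Fin.cons a a', ?_, ?_, ?_⟩
      · simp [iterWord_succ, hw₂]
      · simp [iterWord_succ, hw₁]
      · refine ⟨by simpa using hz, ?_⟩
        simpa using hu
    | cons_right h =>
      -- the unmatched letter `b` joins the first loop
      obtain ⟨k, u, a', hw₂, hw₁, hu⟩ :=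
        exists_iterWord_of_sublistForall₂ h (by simpa [add_assoc] using hle)
      refine ⟨k, Fin.cons (b :: u 0) (Fin.tail u), a', ?_, ?_, ?_⟩
      · rw [iterWord_one_cons_head, hw₂]
      · rw [iterWord_zero_cons_tail, hw₁]
      · rw [partialSumsNonneg_cons_head]
        convert hu using 2
        abel

theorem exists_productive_of_sublistForall₂ {w₁ w₂ : List α} (hw₂ : Fireable V V.init w₂)
    (hemb : List.SublistForall₂ LetterStateLE (annotatedRun V (fun i => (V.init i : ℤ)) w₁)
      (annotatedRun V (fun i => (V.init i : ℤ)) w₂))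
    (hle : wordδ V w₁ ≤ wordδ V w₂) :
    ∃ (k : ℕ) (u : Fin (k + 1) → List α) (a : Fin k → α), Productive V u a ∧
      ∑ l, wordδ V (u l) = wordδ V w₂ - wordδ V w₁ ∧ ∑ j, V.δ (a j) = wordδ V w₁ := by
  obtain ⟨k, u, a, hu₁, hu₀, hu⟩ :=
    exists_iterWord_of_sublistForall₂ hemb (add_le_add_right hle _)
  have hA : ∑ j, V.δ (a j) = wordδ V w₁ := by simpa [hu₀] using (wordδ_iterWord V u a 0).symm
  refine ⟨k, u, a, productive_of_partialSumsNonneg (hu₁ ▸ hw₂) (by simpa using hu), ?_, hA⟩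
  have hD := wordδ_iterWord V u a 1
  rw [hu₁, one_smul, hA] at hD
  rw [hD, add_sub_cancel_right]

end Embedding

section Higman
variable {α : Type} {d : ℕ}

instance {β : Type*} {r : β → β → Prop} [IsPreorder β r] :
    IsPreorder (List β) (List.SublistForall₂ r) where

theorem partiallyWellOrderedOn_sublistForall₂_letterStateLE [Finite α] :
    {l : List (α × (Fin d → ℤ)) | ∀ p ∈ l, 0 ≤ p.2}.PartiallyWellOrderedOn
      (List.SublistForall₂ LetterStateLE) := by
  apply Set.PartiallyWellOrderedOn.partiallyWellOrderedOn_sublistForall₂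
  have hstates : {z : Fin d → ℤ | 0 ≤ z}.IsPWO := by
    refine ((Set.isPWO_of_wellQuasiOrderedLE (Set.univ : Set (Fin d → ℕ))).image_of_monotone
      (f := fun y i => (y i : ℤ)) fun y y' h i => Int.ofNat_le.2 (h i)).mono fun z hz => ?_
    exact ⟨fun i => (z i).toNat, trivial, funext fun i => Int.toNat_of_nonneg (hz i)⟩
  exact ((Set.finite_univ (α := α)).partiallyWellOrderedOn.prod hstates).mono
    fun p hp => ⟨trivial, hp⟩

end Higman

section Limits
variable {d : ℕ}

theorem convTo_natCast_iff (t : ℕ → ℕ) (m : ℕ) :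
    ConvTo (fun n => (t n : ℕ∞)) m ↔ ∀ᶠ n in atTop, t n = m := by
  simp [ConvTo, eventually_atTop]

theorem convTo_top_iff (t : ℕ → ℕ) :
    ConvTo (fun n => (t n : ℕ∞)) ⊤ ↔ Tendsto t atTop atTop := by
  simp [ConvTo, tendsto_atTop, eventually_atTop, Set.infinite_univ]
  exact fun N hN => absurd (hN N) (lt_irrefl N)

theorem mem_limCl_image_toOmega {M : Set (Fin d → ℕ)} {x : Vec d} :
    x ∈ LimCl (toOmega '' M) ↔
      ∃ y : ℕ → Fin d → ℕ, (∀ n, y n ∈ M) ∧ ∀ i, ConvTo (fun n => (y n i : ℕ∞)) (x i) := by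
  constructor
  · rintro ⟨s, hs, hconv⟩
    choose y hy hys using hs
    obtain rfl : s = fun n => toOmega (y n) := funext fun n => (hys n).symm
    exact ⟨y, hy, hconv⟩
  · rintro ⟨y, hy, hconv⟩
    exact ⟨fun n => toOmega (y n), fun n => ⟨y n, hy n, rfl⟩, hconv⟩

end Limits

section LimitClosure
variable {α : Type} {d : ℕ} {V : VAS α d}

/-- `x = c + ω·D` in `ℕ_ω^d`. -/
def EqAddOmegaMul (x : Vec d) (c D : Fin d → ℤ) : Prop :=
  ∀ i, (D i ≠ 0 → x i = ⊤) ∧ (D i = 0 → ∃ m : ℕ, x i = m ∧ (m : ℤ) = c i)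

theorem mem_postStar_of_fireable {w : List α} (h : Fireable V V.init w) :
    (fun i => ((V.init i : ℤ) + wordδ V w i).toNat) ∈ PostStar V :=
  ⟨w, h, fun i => Int.toNat_of_nonneg (h w List.prefix_rfl i)⟩

theorem wordδ_iterWord_apply {k : ℕ} (u : Fin (k + 1) → List α) (a : Fin k → α) (n : ℕ)
    (i : Fin d) :
    wordδ V (iterWord u a n) i = n * ∑ l, wordδ V (u l) i + ∑ j, V.δ (a j) i := by
  simp [wordδ_iterWord, Finset.sum_apply]

theorem Productive.sum_wordδ_nonneg {k : ℕ} {u : Fin (k + 1) → List α} {a : Fin k → α}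
    (h : Productive V u a) (i : Fin d) : 0 ≤ ∑ l, wordδ V (u l) i := by
  by_contra! hneg
  set c : ℤ := V.init i + ∑ j, V.δ (a j) i
  have hfire := h (c.toNat + 1) (by omega) _ List.prefix_rfl i
  rw [wordδ_iterWord_apply] at hfire
  have := Int.self_le_toNat c
  push_cast at hfire
  nlinarith

theorem tendsto_atTop_of_natCast_eq {t : ℕ → ℕ} {c D : ℤ}
    (ht : ∀ n, (t n : ℤ) = c + (n + 1) * D) (hD : 0 < D) : Tendsto t atTop atTop := by
  refine tendsto_atTop.2 fun B => eventually_atTop.2 ⟨B + (-c).toNat, fun n hn => ?_⟩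
  have hc := Int.self_le_toNat (-c)
  have hn : (B : ℤ) + (-c).toNat ≤ n := by exact_mod_cast hn
  have : (n : ℤ) + 1 ≤ (n + 1) * D := le_mul_of_one_le_right (by positivity) hD
  zify
  rw [ht]
  linarith

theorem mem_limCl_of_productive {k : ℕ} {u : Fin (k + 1) → List α} {a : Fin k → α}
    (h : Productive V u a) {x : Vec d}
    (hx : EqAddOmegaMul x (fun i => V.init i + ∑ j, V.δ (a j) i) fun i => ∑ l, wordδ V (u l) i) :
    x ∈ LimCl (toOmega '' PostStar V) := by
  set c : Fin d → ℤ := fun i => V.init i + ∑ j, V.δ (a j) i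
  set D : Fin d → ℤ := fun i => ∑ l, wordδ V (u l) i
  set y : ℕ → Fin d → ℕ :=
    fun n i => ((V.init i : ℤ) + wordδ V (iterWord u a (n + 1)) i).toNat
  have hy : ∀ i n, (y n i : ℤ) = c i + (n + 1) * D i := by
    intro i n
    rw [Int.toNat_of_nonneg (h (n + 1) (by omega) _ List.prefix_rfl i), wordδ_iterWord_apply]
    push_cast
    ring
  refine mem_limCl_image_toOmega.2 ⟨y, fun n => mem_postStar_of_fireable (h (n + 1) (by omega)),
    fun i => ?_⟩
  obtain ⟨hxtop, hxfin⟩ := hx i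
  have hD : 0 ≤ D i := h.sum_wordδ_nonneg i
  rcases hD.eq_or_lt with hD | hD
  · obtain ⟨m, hxm, hm⟩ := hxfin hD.symm
    rw [hxm, convTo_natCast_iff]
    refine Eventually.of_forall fun n => ?_
    have := hy i n
    rw [← hD, mul_zero, add_zero, ← hm] at this
    exact_mod_cast this
  · rw [hxtop hD.ne', convTo_top_iff]
    exact tendsto_atTop_of_natCast_eq (hy i) hD

theorem eqAddOmegaMul_of_sub {x : Vec d} {y₁ y₂ : Fin d → ℕ}
    (h₁ : ∀ i, x i ≠ ⊤ → (y₁ i : ℕ∞) = x i) (h₂ : ∀ i, x i ≠ ⊤ → (y₂ i : ℕ∞) = x i)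
    (hlt : ∀ i, x i = ⊤ → y₁ i < y₂ i) :
    EqAddOmegaMul x (fun i => y₁ i) fun i => (y₂ i : ℤ) - y₁ i := by
  intro i
  dsimp only
  by_cases hi : x i = ⊤
  · have := hlt i hi
    exact ⟨fun _ => hi, fun h => by omega⟩
  · have : y₁ i = y₂ i := by exact_mod_cast (h₁ i hi).trans (h₂ i hi).symm
    exact ⟨fun h => by omega, fun _ => ⟨y₁ i, (h₁ i hi).symm, rfl⟩⟩

theorem exists_lt_of_convTo {x : Vec d} {y : ℕ → Fin d → ℕ}
    (hconv : ∀ i, ConvTo (fun n => (y n i : ℕ∞)) (x i)) {φ : ℕ → ℕ} (hφ : StrictMono φ) :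
    ∃ m n, m < n ∧ (∀ i, x i ≠ ⊤ → (y (φ m) i : ℕ∞) = x i) ∧
      (∀ i, x i ≠ ⊤ → (y (φ n) i : ℕ∞) = x i) ∧ ∀ i, x i = ⊤ → y (φ m) i < y (φ n) i := by
  have hfin : ∀ᶠ n in atTop, ∀ i, x i ≠ ⊤ → (y (φ n) i : ℕ∞) = x i := by
    refine eventually_all.2 fun i => ?_
    by_cases hi : x i = ⊤
    · exact Eventually.of_forall fun _ h => absurd hi h
    · have hconv := hconv i
      rw [← ENat.natCast_toNat hi] at hconv ⊢
      have := (convTo_natCast_iff _ _).1 hconv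
      exact (hφ.tendsto_atTop.eventually this).mono fun n hn _ => by rw [hn]
  obtain ⟨m, hm⟩ := hfin.exists
  have hgrow : ∀ᶠ n in atTop, ∀ i, x i = ⊤ → y (φ m) i < y (φ n) i := by
    refine eventually_all.2 fun i => ?_
    by_cases hi : x i = ⊤
    · have hconv := hconv i
      rw [hi] at hconv
      have := ((convTo_top_iff _).1 hconv).comp hφ.tendsto_atTop
      exact (this.eventually_gt_atTop _).mono fun _ h _ => h
    · exact Eventually.of_forall fun _ h => absurd h hi
  obtain ⟨n, ⟨hn, hmn⟩, hlt⟩ := ((hfin.and hgrow).and (eventually_gt_atTop m)).exists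
  exact ⟨m, n, hlt, hm, hn, hmn⟩

theorem exists_productive_of_mem_limCl [Finite α] {x : Vec d}
    (hx : x ∈ LimCl (toOmega '' PostStar V)) :
    ∃ (k : ℕ) (u : Fin (k + 1) → List α) (a : Fin k → α), Productive V u a ∧
      EqAddOmegaMul x (fun i => V.init i + ∑ j, V.δ (a j) i) fun i => ∑ l, wordδ V (u l) i := by
  obtain ⟨y, hy, hconv⟩ := mem_limCl_image_toOmega.1 hx
  choose w hw hyw using hy
  obtain ⟨g, hg⟩ := partiallyWellOrderedOn_sublistForall₂_letterStateLE.exists_monotone_subseq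
    (f := fun n => annotatedRun V (fun i => (V.init i : ℤ)) (w n))
    fun n => (fireable_iff_intFireable.1 (hw n)).annotatedRun_nonneg
  obtain ⟨n₁, n₂, hlt, hn₁, hn₂, hgrow⟩ := exists_lt_of_convTo hconv g.strictMono
  have hle : wordδ V (w (g n₁)) ≤ wordδ V (w (g n₂)) := fun i => by
    have hy : (y (g n₁) i : ℤ) ≤ y (g n₂) i := by
      by_cases hi : x i = ⊤
      · exact_mod_cast (hgrow i hi).le
      · exact_mod_cast ((hn₁ i hi).trans (hn₂ i hi).symm).le
    linarith [hyw (g n₁) i, hyw (g n₂) i]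
  obtain ⟨k, u, a, hprod, hD, hA⟩ :=
    exists_productive_of_sublistForall₂ (hw (g n₂)) (hg n₁ n₂ hlt.le) hle
  refine ⟨k, u, a, hprod, ?_⟩
  have hA' := fun i => congrFun hA i
  have hD' := fun i => congrFun hD i
  simp only [Finset.sum_apply, Pi.sub_apply] at hA' hD'
  convert eqAddOmegaMul_of_sub hn₁ hn₂ hgrow using 1 <;> funext i
  · rw [hA', hyw]
  · rw [hD', hyw, hyw]
    ring

end LimitClosure

/-- The limit closure of the reachability set of a VAS equals the set of vectors
`x_in + δ(v) + ω·δ(π)` for `v ∈ A*` and `π` productive for `v`: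
componentwise, the vector equals `ω` where `δ(π)` is nonzero (indeed positive),
and `x_in + δ(v)` where `δ(π)` is zero. -/
theorem stmt_8 {α : Type} [Finite α] {d : ℕ} (V : VAS α d) :
    LimCl (toOmega '' PostStar V) =
      {x : Vec d | ∃ (k : ℕ) (u : Fin (k+1) → List α) (a : Fin k → α),
        Productive V u a ∧ ∀ i,
          ((∑ l : Fin (k+1), wordδ V (u l) i) ≠ 0 → x i = ⊤) ∧
          ((∑ l : Fin (k+1), wordδ V (u l) i) = 0 →
            ∃ m : ℕ, x i = (m : ℕ∞) ∧ (m : ℤ) = V.init i + ∑ j : Fin k, V.δ (a j) i)} := by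
  ext x
  refine ⟨exists_productive_of_mem_limCl, ?_⟩
  rintro ⟨k, u, a, hprod, hx⟩
  exact mem_limCl_of_productive hprod hx
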